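/- Left substitution in CNF is interpreted as covariable substitution under the variant negative translation: for all CNF terms M and N, (⟨N\x⟩M)≀ = [λx.M≀/k](N≀), and consequently the variant negative translation is an isomorphism between CNF and the sub-calculus cps, with mutually inverse bijections and 1-1 simulation of βv-steps in both directions. -/
import Mathlib


namespace Paper

mutual
/-- Commutative normal forms of the call-by-value λ-calculus with generalized
applications (terms). -/
inductive GTm : Type
| val : GVal → GTm
| gapp : GVal → GVal → String → GTm → GTm        -- V(W, x.P)
/-- Values of CNF. -/
inductive GVal : Type
| var : String → GVal
| lam : String → GTm → GVal
end

mutual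
def GVal.sub (V : GVal) (x : String) : GVal → GVal
| .var z => if z = x then V else .var z
| .lam z M => if z = x then .lam z M else .lam z (GTm.sub V x M)
def GTm.sub (V : GVal) (x : String) : GTm → GTm
| .val W => .val (GVal.sub V x W)
| .gapp A B y M =>
    .gapp (GVal.sub V x A) (GVal.sub V x B) y (if y = x then M else GTm.sub V x M)
end

/-- Left substitution ⟨N\x⟩P in CNF. -/
def lsub : GTm → String → GTm → GTm
| .val V, x, P => GTm.sub V x P
| .gapp V W y N, x, P => .gapp V W y (lsub N x P)

mutual
/-- One-step reduction of CNF (rule βv), closed under all contexts. -/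
inductive GStep : GTm → GTm → Prop
| betav {y M W x P} :
    GStep (.gapp (.lam y M) W x P) (lsub (GTm.sub W y M) x P)
| valC {V V'} : GStepV V V' → GStep (.val V) (.val V')
| gapp1 {V V' W x P} : GStepV V V' → GStep (.gapp V W x P) (.gapp V' W x P)
| gapp2 {V W W' x P} : GStepV W W' → GStep (.gapp V W x P) (.gapp V W' x P)
| gapp3 {V W x P P'} : GStep P P' → GStep (.gapp V W x P) (.gapp V W x P')
/-- One-step reduction of CNF values. -/
inductive GStepV : GVal → GVal → Prop
| lamC {x M M'} : GStep M M' → GStepV (.lam x M) (.lam x M')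
end


mutual
/-- Commands of the sub-calculus cps: kV or VW(λx.M). -/
inductive PCmd : Type
| kapp : PVal → PCmd
| vapp : PVal → PVal → String → PCmd → PCmd
/-- Values of cps: x or λx.λk.M. -/
inductive PVal : Type
| var : String → PVal
| lam : String → PCmd → PVal
end

mutual
def PVal.sub (V : PVal) (x : String) : PVal → PVal
| .var z => if z = x then V else .var z
| .lam z M => if z = x then .lam z M else .lam z (PCmd.sub V x M)
def PCmd.sub (V : PVal) (x : String) : PCmd → PCmd
| .kapp W => .kapp (PVal.sub V x W)
| .vapp A B y M =>
    .vapp (PVal.sub V x A) (PVal.sub V x B) y (if y = x then M else PCmd.sub V x M)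
end

/-- Substitution [λx.N/k]- of a continuation for the covariable k, with the
critical clause [λx.N/k](kV) = [V/x]N (a σv-reduction performed on the fly). -/
def ksub (x : String) (N : PCmd) : PCmd → PCmd
| .kapp V => PCmd.sub V x N
| .vapp A B y M => .vapp A B y (ksub x N M)

mutual
/-- One-step reduction of cps (rule βv), closed under all contexts. -/
inductive PStep : PCmd → PCmd → Prop
| betav {y M W x N} :
    PStep (.vapp (.lam y M) W x N) (ksub x N (PCmd.sub W y M))
| kappV {V V'} : PStepV V V' → PStep (.kapp V) (.kapp V')
| vapp1 {V V' W x M} : PStepV V V' → PStep (.vapp V W x M) (.vapp V' W x M)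
| vapp2 {V W W' x M} : PStepV W W' → PStep (.vapp V W x M) (.vapp V W' x M)
| vapp3 {V W x M M'} : PStep M M' → PStep (.vapp V W x M) (.vapp V W x M')
/-- One-step reduction of cps values. -/
inductive PStepV : PVal → PVal → Prop
| lamC {x M M'} : PStep M M' → PStepV (.lam x M) (.lam x M')
end

mutual
/-- The variant negative translation on CNF values. -/
def ngv : GVal → PVal
| .var x => .var x
| .lam x M => .lam x (ang M)
/-- The variant negative translation M≀ on CNF terms. -/
def ang : GTm → PCmd
| .val V => .kapp (ngv V)
| .gapp V W x M => .vapp (ngv V) (ngv W) x (ang M)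
end

mutual
/-- The inverse translation on cps values. -/
def pv : PVal → GVal
| .var x => .var x
| .lam x M => .lam x (pc M)
/-- The inverse translation on cps commands. -/
def pc : PCmd → GTm
| .kapp V => .val (pv V)
| .vapp V W x M => .gapp (pv V) (pv W) x (pc M)
end

mutual
theorem ngv_sub (V : GVal) (x : String) : ∀ W : GVal,
    ngv (GVal.sub V x W) = PVal.sub (ngv V) x (ngv W)
| .var z => by simp [GVal.sub, ngv, PVal.sub]; split <;> simp [ngv]
| .lam z M => by
    simp [GVal.sub, ngv, PVal.sub]; split <;> simp [ngv, ang_sub V x M]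
theorem ang_sub (V : GVal) (x : String) : ∀ M : GTm,
    ang (GTm.sub V x M) = PCmd.sub (ngv V) x (ang M)
| .val W => by simp [GTm.sub, ang, PCmd.sub, ngv_sub]
| .gapp A B y M => by
    simp [GTm.sub, ang, PCmd.sub, ngv_sub]
    split <;> simp [ang_sub V x M]
end

theorem ang_lsub (x : String) (M : GTm) : ∀ N : GTm,
    ang (lsub N x M) = ksub x (ang M) (ang N)
| .val V => by simp [lsub, ang, ksub, ang_sub]
| .gapp V W y N => by simp [lsub, ang, ksub, ang_lsub x M N]

mutual
theorem pv_ngv : ∀ V : GVal, pv (ngv V) = V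
| .var x => rfl
| .lam x M => by simp [ngv, pv, pc_ang M]
theorem pc_ang : ∀ M : GTm, pc (ang M) = M
| .val V => by simp [ang, pc, pv_ngv]
| .gapp V W x M => by simp [ang, pc, pv_ngv, pc_ang M]
end

mutual
theorem ngv_pv : ∀ V : PVal, ngv (pv V) = V
| .var x => rfl
| .lam x M => by simp [pv, ngv, ang_pc M]
theorem ang_pc : ∀ M : PCmd, ang (pc M) = M
| .kapp V => by simp [pc, ang, ngv_pv]
| .vapp V W x M => by simp [pc, ang, ngv_pv, ang_pc M]
end

mutual
theorem pv_sub (V : PVal) (x : String) : ∀ W : PVal,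
    pv (PVal.sub V x W) = GVal.sub (pv V) x (pv W)
| .var z => by simp [PVal.sub, pv, GVal.sub]; split <;> simp [pv]
| .lam z M => by
    simp [PVal.sub, pv, GVal.sub]; split <;> simp [pv, pc_sub V x M]
theorem pc_sub (V : PVal) (x : String) : ∀ M : PCmd,
    pc (PCmd.sub V x M) = GTm.sub (pv V) x (pc M)
| .kapp W => by simp [PCmd.sub, pc, GTm.sub, pv_sub]
| .vapp A B y M => by
    simp [PCmd.sub, pc, GTm.sub, pv_sub]
    split <;> simp [pc_sub V x M]
end

theorem pc_ksub (x : String) (N : PCmd) : ∀ M : PCmd,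
    pc (ksub x N M) = lsub (pc M) x (pc N)
| .kapp V => by simp [ksub, pc, lsub, pc_sub]
| .vapp A B y M => by simp [ksub, pc, lsub, pc_ksub x N M]

mutual
theorem gstep_sim : ∀ {M N : GTm}, GStep M N → PStep (ang M) (ang N)
| _, _, .betav => by
    simp [ang, ngv, ang_lsub, ang_sub]; exact PStep.betav
| _, _, .valC h => PStep.kappV (gstepv_sim h)
| _, _, .gapp1 h => PStep.vapp1 (gstepv_sim h)
| _, _, .gapp2 h => PStep.vapp2 (gstepv_sim h)
| _, _, .gapp3 h => PStep.vapp3 (gstep_sim h)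
theorem gstepv_sim : ∀ {V W : GVal}, GStepV V W → PStepV (ngv V) (ngv W)
| _, _, .lamC h => PStepV.lamC (gstep_sim h)
end

mutual
theorem pstep_sim : ∀ {M N : PCmd}, PStep M N → GStep (pc M) (pc N)
| _, _, .betav => by
    simp [pc, pv, pc_ksub, pc_sub]; exact GStep.betav
| _, _, .kappV h => GStep.valC (pstepv_sim h)
| _, _, .vapp1 h => GStep.gapp1 (pstepv_sim h)
| _, _, .vapp2 h => GStep.gapp2 (pstepv_sim h)
| _, _, .vapp3 h => GStep.gapp3 (pstep_sim h)
theorem pstepv_sim : ∀ {V W : PVal}, PStepV V W → GStepV (pv V) (pv W)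
| _, _, .lamC h => GStepV.lamC (pstep_sim h)
end

/-- left substitution in CNF is covariable substitution under the
variant negative translation, and this translation is an isomorphism between CNF
and cps: mutually inverse bijections with a 1-1 simulation of βv-steps both ways. -/
theorem stmt19 :
    (∀ (x : String) (M N : GTm), ang (lsub N x M) = ksub x (ang M) (ang N)) ∧
    (∀ M : GTm, pc (ang M) = M) ∧
    (∀ V : GVal, pv (ngv V) = V) ∧
    (∀ M : PCmd, ang (pc M) = M) ∧
    (∀ V : PVal, ngv (pv V) = V) ∧
    (∀ M N : GTm, GStep M N → PStep (ang M) (ang N)) ∧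
    (∀ M N : PCmd, PStep M N → GStep (pc M) (pc N)) :=
  ⟨ang_lsub, pc_ang, pv_ngv, ang_pc, ngv_pv, fun _ _ => gstep_sim, fun _ _ => pstep_sim⟩

end Paper
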